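/- arXiv:2211.14665 — 2 statements merged into one kernel-verified Lean document; each statement's English description precedes it below -/
import Mathlib

section
/- Let v be a valuation of K and ℋ a closed subspace of 𝒢_K. Then v((I_v ∩ ℋ)^⊥) is the saturation of v(ℋ^⊥) in the value group vK. In particular, if ℋ ⊆ I_v then v(ℋ^⊥) is a saturated subgroup of vK. -/
/- Common definitions: Milnor K-theory of fields (possibly modulo a subgroup of `Kˣ`),
its rationalization, the dual space `𝒢_K` with the relation of alternating pairs,
and valuation-theoretic subspaces, following the paper. -/

set_option synthInstance.maxHeartbeats 400000
set_option maxHeartbeats 1000000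

open scoped TensorProduct

namespace Paper

section Milnor

variable (K : Type) [Field K]

/-- The Steinberg relation together with the relation killing a subgroup `T ≤ Kˣ`; used to
present `K^M_*(K|T) := K^M_*(K)/⟨T⟩` as a quotient of the tensor algebra of the
`ℤ`-module `Kˣ`. -/
inductive MilnorRel (T : Subgroup Kˣ) :
    TensorAlgebra ℤ (Additive Kˣ) → TensorAlgebra ℤ (Additive Kˣ) → Prop
  | steinberg (x y : Kˣ) (h : (x : K) + (y : K) = 1) :
      MilnorRel T (TensorAlgebra.ι ℤ (Additive.ofMul x) * TensorAlgebra.ι ℤ (Additive.ofMul y)) 0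
  | subgroup (x : Kˣ) (h : x ∈ T) :
      MilnorRel T (TensorAlgebra.ι ℤ (Additive.ofMul x)) 0

/-- The Milnor K-theory ring modulo a subgroup: `K^M_*(K|T)`.  For `T = ⊥` this is
Milnor K-theory `K^M_*(K)` itself. -/
abbrev MilnorK (T : Subgroup Kˣ) := RingQuot (MilnorRel K T)

/-- The canonical quotient map from the tensor algebra. -/
noncomputable def milnorMk (T : Subgroup Kˣ) :
    TensorAlgebra ℤ (Additive Kˣ) →+* MilnorK K T :=
  RingQuot.mkRingHom (MilnorRel K T)

/-- The symbol `{x}` in degree one of `K^M_*(K|T)`. -/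
noncomputable def symbol (T : Subgroup Kˣ) (x : Kˣ) : MilnorK K T :=
  milnorMk K T (TensorAlgebra.ι ℤ (Additive.ofMul x))

/-- The degree `n` part of `K^M_*(K|T)`, i.e. the image of the degree `n` part of the
tensor algebra. -/
noncomputable def milnorDeg (T : Subgroup Kˣ) (n : ℕ) : AddSubgroup (MilnorK K T) :=
  AddSubgroup.map (milnorMk K T).toAddMonoidHom
    (Submodule.toAddSubgroup
      ((LinearMap.range (TensorAlgebra.ι ℤ (M := Additive Kˣ))) ^ n))

/-- A ring isomorphism between Milnor K-rings is graded if it maps each degree onto the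
corresponding degree. -/
def IsGradedMilnorIso {K L : Type} [Field K] [Field L] {T : Subgroup Kˣ} {S : Subgroup Lˣ}
    (φ : MilnorK K T ≃+* MilnorK L S) : Prop :=
  ∀ n : ℕ, AddSubgroup.map φ.toRingHom.toAddMonoidHom (milnorDeg K T n) = milnorDeg L S n

/-- `𝒦_*(K|T) := ℚ ⊗_ℤ K^M_*(K|T)`. -/
abbrev MilnorKQ (T : Subgroup Kˣ) := ℚ ⊗[ℤ] MilnorK K T

/-- The symbol `{x}` in degree one of `𝒦_*(K|T)`. -/
noncomputable def symbolQ (T : Subgroup Kˣ) (x : Kˣ) : MilnorKQ K T :=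
  1 ⊗ₜ symbol K T x

/-- The degree `n` part of `𝒦_*(K|T)`. -/
noncomputable def milnorDegQ (T : Subgroup Kˣ) (n : ℕ) : Submodule ℚ (MilnorKQ K T) :=
  Submodule.span ℚ
    ((fun a => (1 : ℚ) ⊗ₜ a) ''
      ((milnorMk K T) ''
        ((LinearMap.range (TensorAlgebra.ι ℤ (M := Additive Kˣ))) ^ n : Submodule ℤ _)))

/-- An isomorphism of the graded `ℚ`-algebras `𝒦_*(K|T)` is graded if it maps each degree
onto the corresponding degree. -/
def IsGradedIsoQ {K L : Type} [Field K] [Field L] {T : Subgroup Kˣ} {S : Subgroup Lˣ}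
    (φ : MilnorKQ K T ≃ₐ[ℚ] MilnorKQ L S) : Prop :=
  ∀ n : ℕ, Submodule.map φ.toLinearMap (milnorDegQ K T n) = milnorDegQ L S n

variable {K}

/-- The ring homomorphism `K^M_*(K|T) → K^M_*(L|S)` induced by a field embedding `σ`
with `σ(T) ⊆ S`. -/
noncomputable def milnorMap {L : Type} [Field L] (σ : K →+* L)
    (T : Subgroup Kˣ) (S : Subgroup Lˣ)
    (h : ∀ x : Kˣ, x ∈ T → Units.map (σ : K →* L) x ∈ S) :
    MilnorK K T →+* MilnorK L S :=
  RingQuot.lift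
    ⟨(TensorAlgebra.lift ℤ
        (((milnorMk L S).toAddMonoidHom.comp
          ((TensorAlgebra.ι ℤ (M := Additive Lˣ)).toAddMonoidHom.comp
            (MonoidHom.toAdditive (Units.map (σ : K →* L))))).toIntLinearMap)).toRingHom,
     by
      rintro a b (⟨x, y, hxy⟩ | ⟨x, hx⟩)
      · simp only [AlgHom.toRingHom_eq_coe, RingHom.coe_coe, map_mul, map_zero,
          TensorAlgebra.lift_ι_apply]
        show milnorMk L S (TensorAlgebra.ι ℤ (Additive.ofMul (Units.map (σ : K →* L) x))) *
          milnorMk L S (TensorAlgebra.ι ℤ (Additive.ofMul (Units.map (σ : K →* L) y))) = 0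
        rw [← map_mul]
        have hsum : ((Units.map (σ : K →* L) x : Lˣ) : L) +
            ((Units.map (σ : K →* L) y : Lˣ) : L) = 1 := by
          simpa using congrArg σ hxy
        exact (RingQuot.mkRingHom_rel
          (MilnorRel.steinberg (T := S) _ _ hsum)).trans (map_zero _)
      · simp only [AlgHom.toRingHom_eq_coe, RingHom.coe_coe, map_zero,
          TensorAlgebra.lift_ι_apply]
        show milnorMk L S (TensorAlgebra.ι ℤ (Additive.ofMul (Units.map (σ : K →* L) x))) = 0
        exact (RingQuot.mkRingHom_rel
          (MilnorRel.subgroup (T := S) _ (h x hx))).trans (map_zero _)⟩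

/-- The induced ring homomorphism `𝒦_*(K|T) → 𝒦_*(L|S)`. -/
noncomputable def milnorMapQ {L : Type} [Field L] (σ : K →+* L)
    (T : Subgroup Kˣ) (S : Subgroup Lˣ)
    (h : ∀ x : Kˣ, x ∈ T → Units.map (σ : K →* L) x ∈ S) :
    MilnorKQ K T →+* MilnorKQ L S :=
  (Algebra.TensorProduct.map (AlgHom.id ℤ ℚ) (milnorMap σ T S h).toIntAlgHom).toRingHom

end Milnor

section Dual

variable (K : Type) [Field K]

/-- `𝒢_K := Hom_ℤ(Kˣ, ℚ)`. -/
abbrev GK := Additive Kˣ →ₗ[ℤ] ℚ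

/-- The weak topology on `𝒢_K`: the topology of pointwise convergence, `ℚ` being discrete. -/
noncomputable def gkTopology : TopologicalSpace (GK K) :=
  TopologicalSpace.induced (fun (f : GK K) (x : Additive Kˣ) => f x)
    (@Pi.topologicalSpace _ _ (fun _ => ⊥))

/-- A subspace of `𝒢_K` is closed if it is closed in the weak topology. -/
def IsClosedSubspace (H : Submodule ℚ (GK K)) : Prop :=
  @IsClosed _ (gkTopology K) (H : Set (GK K))

variable {K}

/-- `f, g ∈ 𝒢_K` form an alternating pair: `ℛ_K(f,g)`. -/
def AltPair (f g : GK K) : Prop :=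
  ∀ x y : Kˣ, (x : K) + (y : K) = 1 →
    f (Additive.ofMul x) * g (Additive.ofMul y) = f (Additive.ofMul y) * g (Additive.ofMul x)

variable (K)

/-- `𝒢_{K|T}`: the functionals vanishing on `T`. -/
def GKrel (T : Subgroup Kˣ) : Submodule ℚ (GK K) where
  carrier := {f | ∀ x ∈ T, f (Additive.ofMul x) = 0}
  add_mem' := by intro f g hf hg x hx; simp [hf x hx, hg x hx]
  zero_mem' := by intro x hx; simp
  smul_mem' := by intro c f hf x hx; simp [hf x hx]

/-- The `ℛ_K`-centralizer `C_K(𝒟)` of a subspace `𝒟 ⊆ 𝒢_K`. -/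
def RCentralizer (D : Submodule ℚ (GK K)) : Submodule ℚ (GK K) where
  carrier := {f | ∀ g ∈ D, AltPair f g}
  add_mem' := by
    intro f1 f2 h1 h2 g hg x y hxy
    have e1 := h1 g hg x y hxy
    have e2 := h2 g hg x y hxy
    simp only [LinearMap.add_apply]
    rw [add_mul, add_mul, e1, e2]
  zero_mem' := by intro g hg x y hxy; simp
  smul_mem' := by
    intro c f hf g hg x y hxy
    simp only [LinearMap.smul_apply, smul_eq_mul]
    rw [mul_assoc, mul_assoc, hf g hg x y hxy]

/-- The `ℛ_K`-centre `Z_K(𝒟)` of a subspace `𝒟 ⊆ 𝒢_K`. -/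
def RCentre (D : Submodule ℚ (GK K)) : Submodule ℚ (GK K) :=
  D ⊓ RCentralizer K D

/-- The orthogonal subgroup `ℋ^⊥ ⊆ Kˣ` of a subspace `ℋ ⊆ 𝒢_K`. -/
def perpSubgroup (H : Submodule ℚ (GK K)) : Subgroup Kˣ where
  carrier := {x | ∀ f ∈ H, f (Additive.ofMul x) = 0}
  one_mem' := by
    intro f hf
    show f (Additive.ofMul 1) = 0
    rw [ofMul_one, map_zero]
  mul_mem' := by
    intro x y hx hy f hf
    have : Additive.ofMul (x * y) = Additive.ofMul x + Additive.ofMul y := rfl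
    rw [this, map_add, hx f hf, hy f hf, add_zero]
  inv_mem' := by
    intro x hx f hf
    have : Additive.ofMul x⁻¹ = -Additive.ofMul x := rfl
    rw [this, map_neg, hx f hf, neg_zero]

/-- `I_v := 𝒢_{K|U_v}` for a valuation (given by its valuation subring `A`). -/
noncomputable def Ival (A : ValuationSubring K) : Submodule ℚ (GK K) := GKrel K A.unitGroup

/-- `D_v := 𝒢_{K|U_v^1}` for a valuation (given by its valuation subring `A`). -/
def Dval (A : ValuationSubring K) : Submodule ℚ (GK K) := GKrel K A.principalUnitGroup

/-- `A` is the valuation ring of the minimal valuation `v_ℐ` attached to a valuative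
subspace `ℐ`: one has `ℐ ⊆ I_v`, and `v` is minimal with this property.  Valuations are
ordered by coarsening (`v ≤ w` iff `v` is a coarsening of `w`, i.e. `𝒪_w ⊆ 𝒪_v`), so
minimality of the valuation means maximality of the valuation subring. -/
def IsMinValuationFor (A : ValuationSubring K) (I : Submodule ℚ (GK K)) : Prop :=
  I ≤ Ival K A ∧ ∀ B : ValuationSubring K, I ≤ Ival K B → B ≤ A

/-- The subgroup of `Kˣ` consisting of the units of a subfield `k ⊆ K`. -/
def subfieldUnits (k : Subfield K) : Subgroup Kˣ where
  carrier := {x | (x : K) ∈ k}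
  one_mem' := k.one_mem
  mul_mem' := by intro a b ha hb; exact k.mul_mem ha hb
  inv_mem' := by
    intro a ha
    show ((a⁻¹ : Kˣ) : K) ∈ k
    rw [Units.val_inv_eq_inv_val]
    exact k.inv_mem ha

/-- The valuation `v` (given by its valuation subring `A`) is `T`-visible:
`I_v ∩ 𝒢_{K|T} = Z_K(D_v ∩ 𝒢_{K|T}) ≠ D_v ∩ 𝒢_{K|T}`, and `v = v_ℐ` for
`ℐ = I_v ∩ 𝒢_{K|T}`. -/
def IsVisible (T : Subgroup Kˣ) (A : ValuationSubring K) : Prop :=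
  Ival K A ⊓ GKrel K T = RCentre K (Dval K A ⊓ GKrel K T) ∧
  Ival K A ⊓ GKrel K T ≠ Dval K A ⊓ GKrel K T ∧
  IsMinValuationFor K A (Ival K A ⊓ GKrel K T)

/-- A subgroup of the value group `vK = Kˣ/U_v` of the valuation corresponding to `A` is
represented by a subgroup `H` of `Kˣ` containing `U_v = A.unitGroup`; `H/U_v` is convex in
`vK` iff whenever `x ∈ H` and `0 ≤ v(y) ≤ v(x)`, also `y ∈ H`. -/
def IsConvexInValueGroup (A : ValuationSubring K) (H : Subgroup Kˣ) : Prop :=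
  A.unitGroup ≤ H ∧
    ∀ x y : Kˣ, x ∈ H → (y : K) ∈ A → ((x : K) * (y : K)⁻¹) ∈ A → y ∈ H

/-- The residue field `kv` of the restriction of the valuation to a subfield `k ⊆ K`,
as a subfield of the residue field `Kv`; it is the set of residues of elements
of `k ∩ 𝒪_v` (which is already closed under the field operations). -/
noncomputable def residueSubfield (A : ValuationSubring K) (k : Subfield K) :
    Subfield (IsLocalRing.ResidueField A) :=
  Subfield.closure ((IsLocalRing.residue A) '' {a : A | (a : K) ∈ k})

end Dual

section KQ

variable (K : Type) [Field K]

/-- A subgroup `T ≤ Kˣ` viewed as a `ℤ`-submodule of `Additive Kˣ`. -/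
def subgroupToSubmodule (T : Subgroup Kˣ) : Submodule ℤ (Additive Kˣ) :=
  AddSubgroup.toIntSubmodule (Subgroup.toAddSubgroup T)

/-- `𝒦_{K|T} := ℚ ⊗_ℤ (Kˣ/T) = 𝒦_1(K|T)`. -/
abbrev KQ (T : Subgroup Kˣ) := ℚ ⊗[ℤ] (Additive Kˣ ⧸ subgroupToSubmodule K T)

/-- The class of `x ∈ Kˣ` in `𝒦_{K|T}`; this is the canonical map `Kˣ → 𝒦_{K|T}`. -/
noncomputable def symbQ (T : Subgroup Kˣ) (x : Kˣ) : KQ K T :=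
  (1 : ℚ) ⊗ₜ Submodule.Quotient.mk (Additive.ofMul x)

/-- The map `Kˣ → 𝒦_1(K|T)`, `x ↦ {x}`, as a `ℤ`-linear map on `Additive Kˣ`. -/
noncomputable def symbolQLinear (T : Subgroup Kˣ) : Additive Kˣ →ₗ[ℤ] MilnorKQ K T :=
  ((Algebra.TensorProduct.includeRight :
      MilnorK K T →ₐ[ℤ] MilnorKQ K T).toLinearMap.toAddMonoidHom.comp
    ((milnorMk K T).toAddMonoidHom.comp
      (TensorAlgebra.ι ℤ (M := Additive Kˣ)).toAddMonoidHom)).toIntLinearMap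

/-- The canonical identification map `𝒦_{K|T} = 𝒦_1(K|T) → 𝒦_*(K|T)` onto degree one. -/
noncomputable def KQtoMilnor (T : Subgroup Kˣ) : KQ K T →ₗ[ℚ] MilnorKQ K T :=
  LinearMap.liftBaseChange ℚ <|
    Submodule.liftQ (subgroupToSubmodule K T) (symbolQLinear K T)
      (by
        intro x hx
        have h2 := RingQuot.mkRingHom_rel (MilnorRel.subgroup (T := T) (Additive.toMul x) hx)
        simp only [LinearMap.mem_ker]
        show (Algebra.TensorProduct.includeRight : MilnorK K T →ₐ[ℤ] MilnorKQ K T)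
          (milnorMk K T (TensorAlgebra.ι ℤ x)) = 0
        rw [show milnorMk K T (TensorAlgebra.ι ℤ x) = 0 from h2.trans (map_zero _), map_zero])

/-- A subspace `ℋ ⊆ 𝒦_{K|T}` is Milnor-closed if for every nonzero `s ∈ ℋ` and every
`t ∈ 𝒦_{K|T}` with `{s,t} = 0` in `𝒦_2(K|T)`, one has `t ∈ ℋ`. -/
def MilnorClosed (T : Subgroup Kˣ) (H : Submodule ℚ (KQ K T)) : Prop :=
  ∀ s ∈ H, s ≠ 0 → ∀ t : KQ K T, KQtoMilnor K T s * KQtoMilnor K T t = 0 → t ∈ H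

/-- The projection `ℚ ⊗_ℤ Kˣ → 𝒦_{K|T}`. -/
noncomputable def KQproj (T : Subgroup Kˣ) : (ℚ ⊗[ℤ] Additive Kˣ) →ₗ[ℚ] KQ K T :=
  LinearMap.baseChange ℚ (subgroupToSubmodule K T).mkQ

lemma KQproj_surjective (T : Subgroup Kˣ) : Function.Surjective (KQproj K T) := by
  intro z
  induction z using TensorProduct.induction_on with
  | zero => exact ⟨0, map_zero _⟩
  | tmul a b =>
      obtain ⟨u, hu⟩ := Submodule.Quotient.mk_surjective (subgroupToSubmodule K T) b
      exact ⟨a ⊗ₜ u, by rw [KQproj, LinearMap.baseChange_tmul, Submodule.mkQ_apply, hu]⟩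
  | add x y hx hy =>
      obtain ⟨x', hx'⟩ := hx
      obtain ⟨y', hy'⟩ := hy
      exact ⟨x' + y', by rw [map_add, hx', hy']⟩

/-- The canonical pairing `𝒦_{K|T} × 𝒢_{K|T} → ℚ`.  It takes the correct value
`⟨s, f⟩` whenever `f` vanishes on `T` (in which case the value is independent of the
choice of preimage), and junk values otherwise. -/
noncomputable def gpair (T : Subgroup Kˣ) (f : GK K) (s : KQ K T) : ℚ :=
  (LinearMap.liftBaseChange ℚ f) (Function.surjInv (KQproj_surjective K T) s)

/-- The image of `𝒦_{L|k}` in `𝒦_{K|k}`, i.e. the subspace spanned by the classes of the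
elements of `Lˣ`. -/
noncomputable def subfieldSpan (k : Subfield K) (L : Subfield K) :
    Submodule ℚ (KQ K (subfieldUnits K k)) :=
  Submodule.span ℚ {s | ∃ x : Kˣ, (x : K) ∈ L ∧ s = symbQ K (subfieldUnits K k) x}

end KQ

section FieldTheory

variable (K : Type) [Field K]

/-- `k` is relatively algebraically closed in `K`. -/
def IsRelAlgClosed (k : Subfield K) : Prop := ∀ x : K, IsAlgebraic k x → x ∈ k

/-- The relative algebraic closure of a subfield `M` in `K` (the set of elements of `K`
algebraic over `M`, which is already a subfield). -/
def relAlgClosure (M : Subfield K) : Subfield K :=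
  Subfield.closure {x : K | IsAlgebraic M x}

/-- The transcendence degree `trdeg(L|k)` of an extension of subfields of `K`:
the supremum of the cardinalities of subsets of `L` that are algebraically independent
over `k`.  `trdeg K k ⊤` is `trdeg(K|k)`. -/
noncomputable def trdeg (k L : Subfield K) : Cardinal :=
  ⨆ s : {s : Set K // s ⊆ (L : Set K) ∧ AlgebraicIndependent k ((↑) : s → K)},
    Cardinal.mk s.1

/-- The perfect closure `k^i` of a subfield `k ⊆ K` inside a perfect closure
`iK : K → Ki` of `K` (with respect to the characteristic exponent `p`): the set of
elements with a `p`-power in `iK(k)` (already a subfield). -/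
def subPerfectClosure {Ki : Type} [Field Ki] (iK : K →+* Ki) (k : Subfield K) (p : ℕ) :
    Subfield Ki :=
  Subfield.closure {x : Ki | ∃ n : ℕ, ∃ a : K, a ∈ k ∧ x ^ p ^ n = iK a}

variable {K}

lemma subfield_units_map {L : Type} [Field L] (σ : K →+* L) (k : Subfield K)
    (l : Subfield L) (h : ∀ x ∈ k, σ x ∈ l) :
    ∀ x : Kˣ, x ∈ subfieldUnits K k → Units.map (σ : K →* L) x ∈ subfieldUnits L l :=
  fun x hx => h x hx

lemma mem_subPerfectClosure {Ki : Type} [Field Ki] (iK : K →+* Ki) (k : Subfield K)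
    (p : ℕ) : ∀ x ∈ k, iK x ∈ subPerfectClosure K iK k p :=
  fun x hx => Subfield.subset_closure ⟨0, x, hx, by simp⟩

lemma bot_units_map {L : Type} [Field L] (σ : K →+* L) (S : Subgroup Lˣ) :
    ∀ x : Kˣ, x ∈ (⊥ : Subgroup Kˣ) → Units.map (σ : K →* L) x ∈ S := by
  intro x hx
  rw [Subgroup.mem_bot] at hx
  subst hx
  rw [map_one]
  exact S.one_mem

end FieldTheory

/-! Since `ℚ` is an injective, torsion-free `ℤ`-module, an element `x` has no positive power in
a subgroup `S ≤ Kˣ` iff some `f ∈ 𝒢_K` vanishes on `S` but not at `x`. For `S = U_v · ℋ^⊥` such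
an `f` lies in `I_v`, and in `ℋ` because a closed `ℋ` equals `(ℋ^⊥)^⊥`: for `f` vanishing on
`ℋ^⊥` and a finite set of points, a functional on `ℚ^I` separating `f` from `ℋ` would, after
clearing denominators, be evaluation at an element of `ℋ^⊥`. Conversely orthogonal subgroups
are saturated, and `U_v ⊆ ℋ^⊥` when `ℋ ⊆ I_v`. -/

section Saturation

open Additive

variable {G : Type*} [CommGroup G]

theorem exists_rat_functional_of_forall_pow_notMem {S : Subgroup G} {x : G}
    (hx : ∀ n : ℕ, 0 < n → x ^ n ∉ S) :
    ∃ f : Additive G →ₗ[ℤ] ℚ, (∀ y ∈ S, f (ofMul y) = 0) ∧ f (ofMul x) ≠ 0 := by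
  set N : Submodule ℤ (Additive G) := AddSubgroup.toIntSubmodule S.toAddSubgroup
  set q : Additive G ⧸ N := Submodule.Quotient.mk (ofMul x)
  have hq : Function.Injective (LinearMap.toSpanSingleton ℤ _ q) := by
    rw [injective_iff_map_eq_zero]
    intro n hn
    by_contra hn0
    have hxn : x ^ n ∈ S := by
      rwa [LinearMap.toSpanSingleton_apply, ← Submodule.Quotient.mk_smul,
        Submodule.Quotient.mk_eq_zero] at hn
    apply hx n.natAbs (Int.natAbs_pos.2 hn0)
    rcases Int.natAbs_eq n with h | h <;> rw [h] at hxn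
    · simpa only [zpow_natCast] using hxn
    · simpa only [zpow_neg, zpow_natCast, inv_mem_iff] using hxn
  obtain ⟨φ, hφ⟩ := (Module.Baer.of_divisible ℚ).extension_property _ hq
    (LinearMap.toSpanSingleton ℤ ℚ 1)
  refine ⟨φ ∘ₗ N.mkQ, fun y hy => ?_, ?_⟩
  · simp [(Submodule.Quotient.mk_eq_zero N).2 (show ofMul y ∈ N from hy)]
  · have hφq : φ q = 1 := by simpa using LinearMap.congr_fun hφ 1
    change φ q ≠ 0
    exact hφq ▸ one_ne_zero

end Saturation

section Interpolation

variable {M : Type*} [AddCommGroup M]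

def evalFinset (I : Finset M) : (M →ₗ[ℤ] ℚ) →ₗ[ℚ] (I → ℚ) where
  toFun f i := f i
  map_add' _ _ := rfl
  map_smul' _ _ := rfl

theorem exists_apply_eq_mul_evalFinset (I : Finset M) (l : Module.Dual ℚ (I → ℚ)) :
    ∃ a : M, ∃ d : ℚ, d ≠ 0 ∧ ∀ f : M →ₗ[ℤ] ℚ, f a = d * l (evalFinset I f) := by
  classical
  obtain ⟨⟨d, hd⟩, hint⟩ := IsLocalization.exist_integer_multiples (nonZeroDivisors ℤ)
    Finset.univ fun i : I => l fun j => if i = j then 1 else 0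
  choose n hn using fun i => hint i (Finset.mem_univ i)
  refine ⟨∑ i, n i • (i : M), d, by exact_mod_cast nonZeroDivisors.ne_zero hd, fun f => ?_⟩
  rw [LinearMap.pi_apply_eq_sum_univ l, Finset.mul_sum, map_sum]
  refine Finset.sum_congr rfl fun i _ => ?_
  rw [map_zsmul, zsmul_eq_mul, ← eq_intCast (algebraMap ℤ ℚ), hn i]
  simp only [evalFinset, LinearMap.coe_mk, AddHom.coe_mk, zsmul_eq_mul, smul_eq_mul]
  ring

theorem exists_mem_eqOn_finset {W : Submodule ℚ (M →ₗ[ℤ] ℚ)} {g : M →ₗ[ℤ] ℚ}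
    (hg : ∀ a : M, (∀ f ∈ W, f a = 0) → g a = 0) (I : Finset M) :
    ∃ f ∈ W, ∀ a ∈ I, f a = g a := by
  by_contra! hW
  have hgW : evalFinset I g ∉ W.map (evalFinset I) := by
    rintro ⟨f, hf, hfg⟩
    obtain ⟨a, ha, hne⟩ := hW f hf
    exact hne (congr_fun hfg ⟨a, ha⟩)
  obtain ⟨l, hlg, hlW⟩ := Submodule.exists_dual_map_eq_bot_of_notMem hgW inferInstance
  obtain ⟨a, d, hd, ha⟩ := exists_apply_eq_mul_evalFinset I l
  have hperp : ∀ f ∈ W, f a = 0 := fun f hf => by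
    rw [ha, (Submodule.eq_bot_iff _).1 hlW _ (Submodule.mem_map_of_mem
      (Submodule.mem_map_of_mem hf)), mul_zero]
  exact hlg ((mul_eq_zero.1 ((ha g).symm.trans (hg a hperp))).resolve_left hd)

end Interpolation

section Perp

variable {K : Type} [Field K]

theorem gkTopology_nhds_hasBasis (g : GK K) :
    (@nhds _ (gkTopology K) g).HasBasis Set.Finite
      fun I => {f : GK K | ∀ a ∈ I, f a = g a} := by
  -- the topology on `ℚ` used by `gkTopology`, not its usual one
  let _ : TopologicalSpace ℚ := ⊥
  have _ : DiscreteTopology ℚ := ⟨rfl⟩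
  rw [gkTopology, nhds_induced, nhds_pi]
  simp only [nhds_discrete]
  exact (Filter.hasBasis_pi_pure _).comap _

theorem IsClosedSubspace.gkrel_perpSubgroup_le {H : Submodule ℚ (GK K)}
    (hcl : IsClosedSubspace K H) : GKrel K (perpSubgroup K H) ≤ H := by
  intro g hg
  let _ : TopologicalSpace (GK K) := gkTopology K
  rw [← SetLike.mem_coe, ← hcl.closure_eq,
    mem_closure_iff_nhds_basis (gkTopology_nhds_hasBasis g)]
  intro I hI
  obtain ⟨f, hf, hfg⟩ := exists_mem_eqOn_finset (W := H) (fun a ha => hg (Additive.toMul a) ha)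
    hI.toFinset
  exact ⟨f, hf, fun a ha => hfg a (hI.mem_toFinset.2 ha)⟩

theorem gkrel_anti {T₁ T₂ : Subgroup Kˣ} (h : T₁ ≤ T₂) : GKrel K T₂ ≤ GKrel K T₁ :=
  fun _ hf x hx => hf x (h hx)

theorem perpSubgroup_anti {H₁ H₂ : Submodule ℚ (GK K)} (h : H₁ ≤ H₂) :
    perpSubgroup K H₂ ≤ perpSubgroup K H₁ :=
  fun _ hx f hf => hx f (h hf)

theorem le_perpSubgroup_gkrel (T : Subgroup Kˣ) : T ≤ perpSubgroup K (GKrel K T) :=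
  fun x hx _ hf => hf x hx

theorem perpSubgroup_powSaturated (H : Submodule ℚ (GK K)) :
    (perpSubgroup K H).PowSaturated := by
  intro n x hx
  refine or_iff_not_imp_left.2 fun hn f hf => ?_
  have hfx : (n : ℚ) * f (Additive.ofMul x) = 0 := by
    rw [← nsmul_eq_mul, ← map_nsmul]
    exact hx f hf
  exact (mul_eq_zero.1 hfx).resolve_left (Nat.cast_ne_zero.2 hn)

end Perp

/-- Subgroups of `vK = Kˣ/U_v` are represented by the subgroups of `Kˣ` containing `U_v`: the
subgroup generated by `v(S)` is `U_v ⊔ S`, and its saturation is `{x | ∃ n > 0, xⁿ ∈ U_v ⊔ S}`. -/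
theorem perp_inf_Ival_saturation (K : Type) [Field K] (A : ValuationSubring K)
    (H : Submodule ℚ (GK K)) (hcl : IsClosedSubspace K H) :
    (∀ x : Kˣ, x ∈ perpSubgroup K (Ival K A ⊓ H) ↔
      ∃ n : ℕ, 0 < n ∧ x ^ n ∈ A.unitGroup ⊔ perpSubgroup K H) ∧
    (H ≤ Ival K A →
      ∀ x : Kˣ, (∃ n : ℕ, 0 < n ∧ x ^ n ∈ A.unitGroup ⊔ perpSubgroup K H) →
        x ∈ A.unitGroup ⊔ perpSubgroup K H) := by
  have hU : A.unitGroup ≤ perpSubgroup K (Ival K A) := le_perpSubgroup_gkrel _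
  refine ⟨fun x => ⟨fun hx => ?_, fun ⟨n, hn, hxn⟩ => ?_⟩, fun hHI x ⟨n, hn, hxn⟩ => ?_⟩
  · by_contra! hno
    obtain ⟨g, hgS, hgx⟩ := exists_rat_functional_of_forall_pow_notMem hno
    have hgI : g ∈ Ival K A := gkrel_anti le_sup_left hgS
    have hgH : g ∈ H := hcl.gkrel_perpSubgroup_le (gkrel_anti le_sup_right hgS)
    exact hgx (hx g ⟨hgI, hgH⟩)
  · have hS : A.unitGroup ⊔ perpSubgroup K H ≤ perpSubgroup K (Ival K A ⊓ H) :=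
      sup_le (hU.trans (perpSubgroup_anti inf_le_left)) (perpSubgroup_anti inf_le_right)
    exact (perpSubgroup_powSaturated _ (hS hxn)).resolve_left hn.ne'
  · rw [sup_eq_right.2 (hU.trans (perpSubgroup_anti hHI))] at hxn ⊢
    exact (perpSubgroup_powSaturated _ hxn).resolve_left hn.ne'

end Paper
end

section
/- Let ℐ be a valuative closed subspace of 𝒢_K with associated minimal valuation v := v_ℐ. Then D_v = C_K(ℐ), i.e. the set of f ∈ 𝒢_K that form an alternating pair with every g ∈ ℐ is exactly the set of f vanishing on the principal units U_v^1. -/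
/- Common definitions: Milnor K-theory of fields (possibly modulo a subgroup of `Kˣ`),
its rationalization, the dual space `𝒢_K` with the relation of alternating pairs,
and valuation-theoretic subspaces, following the paper. -/

set_option synthInstance.maxHeartbeats 400000
set_option maxHeartbeats 1000000

open scoped TensorProduct

namespace ValuationSubring

variable {K : Type} [Field K] (A : ValuationSubring K)

lemma mem_principalUnitGroup_of_add_eq_one {x y : Kˣ} (hxy : (x : K) + y = 1)
    (hx : A.valuation (x : K) < 1) : y ∈ A.principalUnitGroup := by
  rwa [mem_principalUnitGroup_iff, show (y : K) - 1 = -x by linear_combination hxy,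
    Valuation.map_neg]

lemma neg_mul_inv_mem_principalUnitGroup {x y : Kˣ} (hxy : (x : K) + y = 1)
    (hy : 1 < A.valuation (y : K)) : -x * y⁻¹ ∈ A.principalUnitGroup := by
  have hy0 : (y : K) ≠ 0 := y.ne_zero
  have h : ((-x * y⁻¹ : Kˣ) : K) - 1 = -(y : K)⁻¹ := by
    push_cast
    field_simp
    linear_combination -hxy
  rw [mem_principalUnitGroup_iff, h, Valuation.map_neg, map_inv₀]
  exact inv_lt_one_of_one_lt₀ hy

lemma exists_add_eq_one_of_mem_principalUnitGroup {u : Kˣ} (hu : u ∈ A.principalUnitGroup)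
    (hu1 : u ≠ 1) : ∃ t : Kˣ, (t : K) + u = 1 ∧ A.valuation (t : K) < 1 := by
  have ht : (1 : K) - u ≠ 0 := sub_ne_zero.2 fun h => hu1 (Units.ext h.symm)
  refine ⟨Units.mk0 _ ht, by simp, ?_⟩
  rwa [Units.val_mk0, Valuation.map_sub_swap]

lemma mem_iff_of_valuation_eq {H : Subgroup Kˣ} (hH : A.unitGroup ≤ H) {x y : Kˣ}
    (h : A.valuation (x : K) = A.valuation (y : K)) : x ∈ H ↔ y ∈ H := by
  have hy : A.valuation (y : K) ≠ 0 := (Valuation.ne_zero_iff _).2 y.ne_zero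
  have hxy : x * y⁻¹ ∈ H := hH <| by
    rw [mem_unitGroup_iff, Units.val_mul, map_mul, Units.val_inv_eq_inv_val, map_inv₀, h,
      mul_inv_cancel₀ hy]
  exact ⟨fun hx => by simpa using H.mul_mem (H.inv_mem hxy) hx,
    fun hy => by simpa using H.mul_mem hxy hy⟩

/-- `1 - t = (1 - a)(1 - q)` with `q = (t - a) / (1 - a)`. -/
lemma exists_factorization_of_valuation_lt {t u a : Kˣ} (htu : (t : K) + u = 1)
    (hta : A.valuation (t : K) < A.valuation (a : K)) (ha : A.valuation (a : K) < 1) :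
    ∃ p q r : Kˣ, (a : K) + p = 1 ∧ (q : K) + r = 1 ∧
      A.valuation (q : K) = A.valuation (a : K) ∧ u = p * r := by
  have hp : (1 : K) - a ≠ 0 := fun h => by
    rw [← sub_eq_zero.1 h, map_one] at ha; exact ha.false
  set p := Units.mk0 _ hp
  have hq : (t : K) - a ≠ 0 := fun h => by rw [sub_eq_zero.1 h] at hta; exact hta.false
  refine ⟨p, Units.mk0 _ (div_ne_zero hq hp), u * p⁻¹, by simp [p], ?_, ?_, by simp⟩
  · simp only [Units.val_mk0, Units.val_mul, Units.val_inv_eq_inv_val, p]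
    field_simp
    linear_combination htu
  · rw [Units.val_mk0, map_div₀, Valuation.map_sub_eq_of_lt_right _ hta,
      Valuation.map_one_sub_of_lt _ ha, div_one]

def adjoinInv {t : K} (ht : t ∈ A) : ValuationSubring K where
  carrier := {x | ∃ n : ℕ, x * t ^ n ∈ A}
  zero_mem' := ⟨0, by simp⟩
  one_mem' := ⟨0, by simp⟩
  add_mem' := by
    rintro x y ⟨n, hn⟩ ⟨m, hm⟩
    refine ⟨n + m, ?_⟩
    rw [show (x + y) * t ^ (n + m) = x * t ^ n * t ^ m + y * t ^ m * t ^ n by ring]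
    exact A.add_mem _ _ (A.mul_mem _ _ hn (pow_mem ht m)) (A.mul_mem _ _ hm (pow_mem ht n))
  mul_mem' := by
    rintro x y ⟨n, hn⟩ ⟨m, hm⟩
    exact ⟨n + m, by rw [pow_add, mul_mul_mul_comm]; exact A.mul_mem _ _ hn hm⟩
  neg_mem' := by
    rintro x ⟨n, hn⟩
    exact ⟨n, by rw [neg_mul]; exact A.neg_mem _ hn⟩
  mem_or_inv_mem' x :=
    (A.mem_or_inv_mem x).imp (fun h => ⟨0, by simpa⟩) (fun h => ⟨0, by simpa⟩)

lemma mem_adjoinInv_iff {t : K} (ht : t ∈ A) {x : K} :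
    x ∈ A.adjoinInv ht ↔ ∃ n : ℕ, x * t ^ n ∈ A := Iff.rfl

lemma inv_mem_adjoinInv {t : K} (ht : t ∈ A) (ht0 : t ≠ 0) : t⁻¹ ∈ A.adjoinInv ht :=
  ⟨1, by rw [pow_one, inv_mul_cancel₀ ht0]; exact A.one_mem⟩

/-- A unit of `A[t⁻¹]` has value between `v t ^ N` and `v t ^ (-N)` for some `N`; peel off
one factor `t` at a time. -/
lemma unitGroup_adjoinInv_le {t : Kˣ} (ht : (t : K) ∈ A) {H : Subgroup Kˣ}
    (hH : ∀ a : Kˣ, A.valuation (t : K) ≤ A.valuation (a : K) → A.valuation (a : K) ≤ 1 →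
      a ∈ H) :
    (A.adjoinInv ht).unitGroup ≤ H := by
  set v := A.valuation
  have ht1 : v t ≤ 1 := (A.valuation_le_one_iff _).2 ht
  have htH : t ∈ H := hH t le_rfl ht1
  have hvt : 0 < v t := (Valuation.pos_iff _).2 t.ne_zero
  have mem_of_pow_le : ∀ (N : ℕ) (z : Kˣ), v t ^ N ≤ v z → v z ≤ 1 → z ∈ H := by
    intro N
    induction N with
    | zero => exact fun z hNz hz => hH z (ht1.trans (by simpa using hNz)) hz
    | succ N ih =>
      intro z hNz hz
      by_cases htz : v t ≤ v z
      · exact hH z htz hz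
      · have hzt : z * t⁻¹ ∈ H := by
          have hv : v ((z * t⁻¹ : Kˣ) : K) = v z * (v t)⁻¹ := by simp
          refine ih _ ?_ ?_ <;> rw [hv]
          · rwa [le_mul_inv_iff₀ hvt, ← pow_succ]
          · rw [mul_inv_le_iff₀ hvt, one_mul]
            exact (not_le.1 htz).le
        simpa using H.mul_mem hzt htH
  intro x hx
  set B := A.adjoinInv ht
  have hxB : (x : K) ∈ B := (B.valuation_le_one_iff _).1 hx.le
  have hxB' : (x : K)⁻¹ ∈ B := (B.valuation_le_one_iff _).1 (by
    rw [map_inv₀, (mem_unitGroup_iff _ _).1 hx, inv_one])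
  obtain ⟨n, hn⟩ := (A.mem_adjoinInv_iff ht).1 hxB
  obtain ⟨m, hm⟩ := (A.mem_adjoinInv_iff ht).1 hxB'
  have hz : x * t ^ n ∈ H := by
    refine mem_of_pow_le (n + m) _ ?_ (by simpa using (A.valuation_le_one_iff _).2 hn)
    have hm' : (v x)⁻¹ * v t ^ m ≤ 1 := by simpa using (A.valuation_le_one_iff _).2 hm
    calc v t ^ (n + m) = v ((x * t ^ n : Kˣ) : K) * ((v x)⁻¹ * v t ^ m) := by
          have hx0 : v x ≠ 0 := (Valuation.ne_zero_iff _).2 x.ne_zero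
          simp only [Units.val_mul, Units.val_pow_eq_pow_val, map_mul, map_pow]
          field_simp
          exact pow_add _ _ _
      _ ≤ v ((x * t ^ n : Kˣ) : K) := mul_le_of_le_one_right' hm'
  simpa using H.mul_mem hz (H.pow_mem (H.inv_mem htH) n)

end ValuationSubring

namespace Paper

section Valuative

variable {K : Type} [Field K]

lemma apply_ofMul_neg (f : GK K) (x : Kˣ) :
    f (Additive.ofMul (-x)) = f (Additive.ofMul x) := by
  have h : f (Additive.ofMul (-1 : Kˣ)) + f (Additive.ofMul (-1 : Kˣ)) = 0 := by
    rw [← map_add, ← ofMul_mul, neg_one_mul, neg_neg, ofMul_one, map_zero]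
  rw [← neg_one_mul, ofMul_mul, map_add, show f (Additive.ofMul (-1 : Kˣ)) = 0 by linarith,
    zero_add]

lemma apply_eq_of_mul_inv_mem {T : Subgroup Kˣ} {f : GK K} (hf : f ∈ GKrel K T) {x y : Kˣ}
    (h : x * y⁻¹ ∈ T) : f (Additive.ofMul x) = f (Additive.ofMul y) := by
  have := hf _ h
  rw [ofMul_mul, ofMul_inv, map_add, map_neg] at this
  linarith

lemma le_gkrel_iff {I : Submodule ℚ (GK K)} {T : Subgroup Kˣ} :
    I ≤ GKrel K T ↔ T ≤ perpSubgroup K I :=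
  ⟨fun h _ hx _ hg => h hg _ hx, fun h _ hg _ hx => h hx _ hg⟩

lemma AltPair.apply_eq_zero {f g : GK K} (h : AltPair f g) {x y : Kˣ}
    (hxy : (x : K) + y = 1) (hgy : g (Additive.ofMul y) = 0)
    (hgx : g (Additive.ofMul x) ≠ 0) : f (Additive.ofMul y) = 0 := by
  have := h x y hxy
  rw [hgy, mul_zero] at this
  exact (mul_eq_zero.1 this.symm).resolve_right hgx

variable (A : ValuationSubring K)

lemma altPair_of_mem_dval_of_mem_ival {f g : GK K} (hf : f ∈ Dval K A) (hg : g ∈ Ival K A) :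
    AltPair f g := by
  intro x y hxy
  wlog hle : A.valuation (x : K) ≤ A.valuation (y : K) generalizing x y
  · exact (this y x (by rwa [add_comm]) (le_of_not_ge hle)).symm
  rcases lt_or_ge (A.valuation (x : K)) 1 with hx | hx
  · have hy := A.mem_principalUnitGroup_of_add_eq_one hxy hx
    rw [hf y hy, hg y (A.principal_units_le_units hy), mul_zero, zero_mul]
  rcases (hx.trans hle).eq_or_lt with hy | hy
  · have hx' : x ∈ A.unitGroup := le_antisymm (hle.trans hy.ge) hx
    rw [hg x hx', hg y hy.symm, mul_zero, mul_zero]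
  · have hxy' := A.neg_mul_inv_mem_principalUnitGroup hxy hy
    rw [← apply_ofMul_neg f x, ← apply_ofMul_neg g x, apply_eq_of_mul_inv_mem hf hxy',
      apply_eq_of_mul_inv_mem hg (A.principal_units_le_units hxy')]

lemma dval_le_rCentralizer {I : Submodule ℚ (GK K)} (hI : I ≤ Ival K A) :
    Dval K A ≤ RCentralizer K I :=
  fun _ hf _ hg => altPair_of_mem_dval_of_mem_ival A hf (hI hg)

lemma apply_eq_zero_of_add_eq_one {I : Submodule ℚ (GK K)} (hI : I ≤ Ival K A) {f : GK K}
    (hf : f ∈ RCentralizer K I) {x y : Kˣ} (hxy : (x : K) + y = 1)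
    (hx : A.valuation (x : K) < 1) (hxI : x ∉ perpSubgroup K I) :
    f (Additive.ofMul y) = 0 := by
  obtain ⟨g, hg, hgx⟩ : ∃ g ∈ I, g (Additive.ofMul x) ≠ 0 := by
    simpa [perpSubgroup] using hxI
  exact (hf g hg).apply_eq_zero hxy
    (hI hg y (A.principal_units_le_units (A.mem_principalUnitGroup_of_add_eq_one hxy hx))) hgx

lemma exists_notMem_perpSubgroup {I : Submodule ℚ (GK K)} (hA : IsMinValuationFor K A I)
    {t : Kˣ} (ht : A.valuation (t : K) < 1) :
    ∃ a : Kˣ, A.valuation (t : K) ≤ A.valuation (a : K) ∧ A.valuation (a : K) < 1 ∧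
      a ∉ perpSubgroup K I := by
  by_contra! h
  have htA : (t : K) ∈ A := (A.valuation_le_one_iff _).1 ht.le
  have hunits : A.unitGroup ≤ perpSubgroup K I := le_gkrel_iff.1 hA.1
  have hB : I ≤ Ival K (A.adjoinInv htA) := le_gkrel_iff.2 <|
    A.unitGroup_adjoinInv_le htA fun a hta ha => ha.lt_or_eq.elim (h a hta) (@hunits a)
  have htinv := hA.2 _ hB (A.inv_mem_adjoinInv htA t.ne_zero)
  rw [← A.valuation_le_one_iff, map_inv₀] at htinv
  exact (one_lt_inv_iff₀.2 ⟨(Valuation.pos_iff _).2 t.ne_zero, ht⟩).not_ge htinv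

lemma rCentralizer_le_dval {I : Submodule ℚ (GK K)} (hA : IsMinValuationFor K A I) :
    RCentralizer K I ≤ Dval K A := by
  intro f hf u hu
  rcases eq_or_ne u 1 with rfl | hu1
  · rw [ofMul_one, map_zero]
  obtain ⟨t, htu, ht⟩ := A.exists_add_eq_one_of_mem_principalUnitGroup hu hu1
  obtain ⟨a, hta, ha, haI⟩ := exists_notMem_perpSubgroup A hA ht
  have hunits : A.unitGroup ≤ perpSubgroup K I := le_gkrel_iff.1 hA.1
  rcases hta.eq_or_lt with hta | hta
  · have htI : t ∉ perpSubgroup K I := (A.mem_iff_of_valuation_eq hunits hta).not.2 haI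
    exact apply_eq_zero_of_add_eq_one A hA.1 hf htu ht htI
  · obtain ⟨p, q, r, hap, hqr, hqa, rfl⟩ := A.exists_factorization_of_valuation_lt htu hta ha
    have hqI : q ∉ perpSubgroup K I := (A.mem_iff_of_valuation_eq hunits hqa).not.2 haI
    rw [ofMul_mul, map_add, apply_eq_zero_of_add_eq_one A hA.1 hf hap ha haI,
      apply_eq_zero_of_add_eq_one A hA.1 hf hqr (hqa ▸ ha) hqI, add_zero]

end Valuative

theorem centralizer_of_valuative_general (K : Type) [Field K] (I : Submodule ℚ (GK K))
    (A : ValuationSubring K)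
    (hA : IsMinValuationFor K A I) :
    Dval K A = RCentralizer K I :=
  le_antisymm (dval_le_rCentralizer A hA.1) (rCentralizer_le_dval A hA)

/-- If `ℐ` is a valuative closed subspace with associated minimal
valuation `v = v_ℐ`, then `D_v = C_K(ℐ)`. -/
theorem centralizer_of_valuative (K : Type) [Field K] (I : Submodule ℚ (GK K))
    (hcl : IsClosedSubspace K I) (A : ValuationSubring K)
    (hA : IsMinValuationFor K A I) :
    Dval K A = RCentralizer K I :=
  centralizer_of_valuative_general K I A hA

end Paper
end
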